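/- Along the flow (w,s)' = (k(1 - c(t)s), w - ν(t)s) with time-dependent coefficients satisfying c(t) ≥ c₋ and ν(t) ≥ ν₋, and for a function P₁ > 0 solving dP₁/ds = ν₋√(2P₁) + k(1 - c₋ s), the Lyapunov quantity L(t) := w(t) - ν₋ s(t) + √(2P₁(s(t))) satisfies the differential inequality dL/dt ≤ (k(1 - c₋ s(t))/√(2P₁(s(t)))) · L(t), provided 0 < s(t) ≤ 1/c₋ for all t in the interval. -/

import Mathlib

/-!
Since `dP₁/ds = ν₋ √(2P₁) + k(1 - c₋ s)`, differentiating `√(2P₁(s))` along the flow produces a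
term `ν₋ s'` that cancels the one coming from `-ν₋ s`, leaving
`L' = k(1 - c s) + k(1 - c₋ s) s' / √(2P₁(s))`.
Subtracting this from `k(1 - c₋ s)/√(2P₁(s)) · L` leaves
`k(c - c₋) s + k(1 - c₋ s)(ν - ν₋) s / √(2P₁(s))`, which is nonnegative when `0 < s ≤ 1/c₋`.
-/

open Real

lemma hasDerivAt_sqrt_two_mul_comp {P s : ℝ → ℝ} {p s' t : ℝ}
    (hP : HasDerivAt P p (s t)) (hs : HasDerivAt s s' t) (hpos : 0 < P (s t)) :
    HasDerivAt (fun τ => √(2 * P (s τ))) (p * s' / √(2 * P (s t))) t := by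
  have h2P : HasDerivAt (fun τ => 2 * P (s τ)) (2 * (p * s')) t := (hP.comp t hs).const_mul 2
  exact (h2P.sqrt (by positivity)).congr_deriv (by ring)

lemma hasDerivAt_lyapunov {w s P : ℝ → ℝ} {ν₀ g w' s' t : ℝ}
    (hw : HasDerivAt w w' t) (hs : HasDerivAt s s' t)
    (hP : HasDerivAt P (ν₀ * √(2 * P (s t)) + g) (s t)) (hpos : 0 < P (s t)) :
    HasDerivAt (fun τ => w τ - ν₀ * s τ + √(2 * P (s τ)))
      (w' + g * s' / √(2 * P (s t))) t := by
  refine ((hw.sub (hs.const_mul ν₀)).add (hasDerivAt_sqrt_two_mul_comp hP hs hpos)).congr_deriv ?_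
  field_simp
  ring

lemma lyapunov_derivative_le {k cm c νm ν x w S : ℝ} (hk : 0 ≤ k) (hS : 0 < S)
    (hcb : cm ≤ c) (hνb : νm ≤ ν) (hx : 0 ≤ x) (hcx : cm * x ≤ 1) :
    k * (1 - c * x) + k * (1 - cm * x) * (w - ν * x) / S ≤
      k * (1 - cm * x) / S * (w - νm * x + S) := by
  have hgap : k * (1 - c * x) * S + k * (1 - cm * x) * (w - ν * x) ≤
      k * (1 - cm * x) * (w - νm * x + S) := by
    nlinarith [mul_nonneg (mul_nonneg (mul_nonneg hk (sub_nonneg.mpr hcx)) hx) (sub_nonneg.mpr hνb),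
      mul_nonneg (mul_nonneg (mul_nonneg hk (sub_nonneg.mpr hcb)) hx) hS.le]
  rw [div_mul_eq_mul_div, le_div_iff₀ hS, add_mul, div_mul_cancel₀ _ hS.ne']
  exact hgap

theorem stmt2_general (k cm νm : ℝ) (hk : 0 < k) (hc : 0 < cm)
    (I J : Set ℝ) (c ν : ℝ → ℝ)
    (hcb : ∀ t ∈ I, cm ≤ c t) (hνb : ∀ t ∈ I, νm ≤ ν t)
    (w s P₁ : ℝ → ℝ)
    (hw : ∀ t ∈ I, HasDerivAt w (k * (1 - c t * s t)) t)
    (hs : ∀ t ∈ I, HasDerivAt s (w t - ν t * s t) t)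
    (hP : ∀ x ∈ J, HasDerivAt P₁ (νm * Real.sqrt (2 * P₁ x) + k * (1 - cm * x)) x)
    (hPpos : ∀ x ∈ J, 0 < P₁ x)
    (hrange : ∀ t ∈ I, s t ∈ J)
    (hsbound : ∀ t ∈ I, 0 < s t ∧ s t ≤ 1 / cm) :
    ∀ t ∈ I, ∃ d : ℝ,
      HasDerivAt (fun τ => w τ - νm * s τ + Real.sqrt (2 * P₁ (s τ))) d t ∧
      d ≤ k * (1 - cm * s t) / Real.sqrt (2 * P₁ (s t)) *
        (w t - νm * s t + Real.sqrt (2 * P₁ (s t))) := by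
  intro t ht
  have hpos := hPpos (s t) (hrange t ht)
  obtain ⟨hs_pos, hs_le⟩ := hsbound t ht
  refine ⟨_, hasDerivAt_lyapunov (hw t ht) (hs t ht) (hP (s t) (hrange t ht)) hpos, ?_⟩
  exact lyapunov_derivative_le hk.le (sqrt_pos.mpr (by positivity)) (hcb t ht) (hνb t ht)
    hs_pos.le ((le_div_iff₀' hc).mp hs_le)

theorem stmt2 (k cm νm : ℝ) (hk : 0 < k) (hc : 0 < cm) (hν : 0 < νm)
    (I J : Set ℝ) (c ν : ℝ → ℝ)
    (hcb : ∀ t ∈ I, cm ≤ c t) (hνb : ∀ t ∈ I, νm ≤ ν t)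
    (w s P₁ : ℝ → ℝ)
    (hw : ∀ t ∈ I, HasDerivAt w (k * (1 - c t * s t)) t)
    (hs : ∀ t ∈ I, HasDerivAt s (w t - ν t * s t) t)
    (hP : ∀ x ∈ J, HasDerivAt P₁ (νm * Real.sqrt (2 * P₁ x) + k * (1 - cm * x)) x)
    (hPpos : ∀ x ∈ J, 0 < P₁ x)
    (hrange : ∀ t ∈ I, s t ∈ J)
    (hsbound : ∀ t ∈ I, 0 < s t ∧ s t ≤ 1 / cm) :
    ∀ t ∈ I, ∃ d : ℝ,
      HasDerivAt (fun τ => w τ - νm * s τ + Real.sqrt (2 * P₁ (s τ))) d t ∧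
      d ≤ k * (1 - cm * s t) / Real.sqrt (2 * P₁ (s t)) *
        (w t - νm * s t + Real.sqrt (2 * P₁ (s t))) :=
  stmt2_general k cm νm hk hc I J c ν hcb hνb w s P₁ hw hs hP hPpos hrange hsbound
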